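/- arXiv:2509.21174 — 3 statements merged into one kernel-verified Lean document; each statement's English description precedes it below -/
import Mathlib

section
/- Let A be a positive semidefinite d×d real matrix and let A⁻ be any matrix satisfying A⁻AA⁻ = A⁻, AA⁻A = A, and A⁻ positive semidefinite. Then Tr(A†) ≤ Tr(A⁻), where A† is the Moore–Penrose pseudoinverse of A. -/
open Matrix

/-- `B` is the Moore–Penrose pseudoinverse of `A` (the four Penrose conditions, which
characterize it uniquely). -/
def IsMoorePenrose {d : ℕ} (A B : Matrix (Fin d) (Fin d) ℝ) : Prop :=
  A * B * A = A ∧ B * A * B = B ∧ (A * B)ᵀ = A * B ∧ (B * A)ᵀ = B * A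

private lemma penrose_unique {d : ℕ} {A B C : Matrix (Fin d) (Fin d) ℝ}
    (hB : IsMoorePenrose A B) (hC : IsMoorePenrose A C) : B = C := by
  obtain ⟨hB1, hB2, hB3, hB4⟩ := hB
  obtain ⟨hC1, hC2, hC3, hC4⟩ := hC
  have hAt : Aᵀ = Aᵀ * (A * C) := by
    conv_lhs => rw [← hC1]
    rw [Matrix.transpose_mul, hC3]
  have hAt' : Aᵀ = (C * A) * Aᵀ := by
    conv_lhs => rw [← hC1, Matrix.mul_assoc]
    rw [Matrix.transpose_mul, hC4]
  have hAB : A * B = A * C := by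
    calc A * B = (A * B)ᵀ := hB3.symm
    _ = Bᵀ * Aᵀ := by rw [Matrix.transpose_mul]
    _ = Bᵀ * (Aᵀ * (A * C)) := by rw [← hAt]
    _ = (Bᵀ * Aᵀ) * (A * C) := by rw [Matrix.mul_assoc]
    _ = (A * B)ᵀ * (A * C) := by rw [Matrix.transpose_mul]
    _ = (A * B) * (A * C) := by rw [hB3]
    _ = (A * B * A) * C := by noncomm_ring
    _ = A * C := by rw [hB1]
  have hBA : B * A = C * A := by
    calc B * A = (B * A)ᵀ := hB4.symm
    _ = Aᵀ * Bᵀ := by rw [Matrix.transpose_mul]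
    _ = ((C * A) * Aᵀ) * Bᵀ := by rw [← hAt']
    _ = (C * A) * (Aᵀ * Bᵀ) := by rw [Matrix.mul_assoc]
    _ = (C * A) * (B * A)ᵀ := by rw [Matrix.transpose_mul]
    _ = (C * A) * (B * A) := by rw [hB4]
    _ = C * (A * B * A) := by noncomm_ring
    _ = C * A := by rw [hB1]
  calc B = B * A * B := hB2.symm
  _ = C * A * B := by rw [hBA]
  _ = C * (A * B) := by rw [Matrix.mul_assoc]
  _ = C * (A * C) := by rw [hAB]
  _ = C * A * C := by rw [Matrix.mul_assoc]
  _ = C := hC2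

private lemma trace_nonneg_of_posSemidef {d : ℕ} {M : Matrix (Fin d) (Fin d) ℝ}
    (h : M.PosSemidef) : 0 ≤ M.trace := by
  rw [Matrix.trace]
  apply Finset.sum_nonneg
  intro i _
  have := h.2 (Finsupp.single i 1)
  simpa using this

/-- **Trace inequality for generalized inverses.** Let `A ⪰ 0` and let `A⁻` be any reflexive
positive semidefinite generalized inverse of `A` (`A⁻AA⁻ = A⁻`, `AA⁻A = A`, `A⁻ ⪰ 0`).
Then `Tr(A†) ≤ Tr(A⁻)` where `A†` is the Moore–Penrose pseudoinverse of `A`. -/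
theorem trace_pseudoinverse_le (d : ℕ) (A Adag Aminus : Matrix (Fin d) (Fin d) ℝ)
    (hA : A.PosSemidef) (hdag : IsMoorePenrose A Adag)
    (h1 : Aminus * A * Aminus = Aminus) (h2 : A * Aminus * A = A)
    (h3 : Aminus.PosSemidef) :
    Adag.trace ≤ Aminus.trace := by
  obtain ⟨p1, p2, p3, p4⟩ := hdag
  have hAt : Aᵀ = A := by
    have := hA.isHermitian
    rwa [Matrix.IsHermitian, Matrix.conjTranspose_eq_transpose_of_trivial] at this
  -- Adag is symmetric, by uniqueness of the Moore-Penrose inverse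
  have q1 : A * Adagᵀ * A = A := by
    have := congrArg Matrix.transpose p1
    simpa [Matrix.transpose_mul, hAt, Matrix.mul_assoc] using this
  have q2 : Adagᵀ * A * Adagᵀ = Adagᵀ := by
    have := congrArg Matrix.transpose p2
    simpa [Matrix.transpose_mul, hAt, Matrix.mul_assoc] using this
  have e3 : A * Adagᵀ = Adag * A := by
    calc A * Adagᵀ = Aᵀ * Adagᵀ := by rw [hAt]
    _ = (Adag * A)ᵀ := (Matrix.transpose_mul _ _).symm
    _ = Adag * A := p4
  have e4 : Adagᵀ * A = A * Adag := by
    calc Adagᵀ * A = Adagᵀ * Aᵀ := by rw [hAt]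
    _ = (A * Adag)ᵀ := (Matrix.transpose_mul _ _).symm
    _ = A * Adag := p3
  have q3 : (A * Adagᵀ)ᵀ = A * Adagᵀ := by rw [e3]; exact p4
  have q4 : (Adagᵀ * A)ᵀ = Adagᵀ * A := by rw [e4]; exact p3
  have hsym : Adagᵀ = Adag := penrose_unique ⟨q1, q2, q3, q4⟩ ⟨p1, p2, p3, p4⟩
  have hcomm := e3
  rw [hsym] at hcomm
  have hP2 : (Adag * A) * (Adag * A) = Adag * A := by
    rw [← Matrix.mul_assoc (Adag * A) Adag A, p2]
  have hRep : Adag = (Adag * A) * Aminus * (Adag * A) := by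
    calc Adag = Adag * A * Adag := p2.symm
    _ = Adag * (A * Aminus * A) * Adag := by rw [h2]
    _ = (Adag * A) * Aminus * (A * Adag) := by noncomm_ring
    _ = (Adag * A) * Aminus * (Adag * A) := by rw [hcomm]
  have hQt : (1 - Adag * A)ᵀ = 1 - Adag * A := by
    rw [Matrix.transpose_sub, Matrix.transpose_one, p4]
  have hQpsd : ((1 - Adag * A) * Aminus * (1 - Adag * A)).PosSemidef := by
    have := h3.mul_mul_conjTranspose_same (1 - Adag * A)
    rwa [Matrix.conjTranspose_eq_transpose_of_trivial, hQt] at this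
  have h6 : (1 - Adag * A) * (1 - Adag * A) = 1 - Adag * A := by
    simp only [Matrix.sub_mul, Matrix.mul_sub, Matrix.one_mul, Matrix.mul_one, hP2,
      sub_self, sub_zero]
  have h7 : Adag.trace = ((Adag * A) * Aminus).trace := by
    conv_lhs => rw [hRep]
    rw [Matrix.trace_mul_comm, ← Matrix.mul_assoc, hP2]
  have htr : ((1 - Adag * A) * Aminus * (1 - Adag * A)).trace
      = Aminus.trace - Adag.trace := by
    rw [Matrix.trace_mul_comm, ← Matrix.mul_assoc, h6, Matrix.sub_mul, Matrix.one_mul,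
      Matrix.trace_sub, h7]
  have := trace_nonneg_of_posSemidef hQpsd
  rw [htr] at this
  linarith
end

section
/- Let M be a random symmetric p×p matrix with integrable entries such that for all unit vectors u, v ∈ ℝ^p, the random variables uᵀMu and vᵀMv have the same distribution. Then E[M] = (E[Tr(M)]/p) · I_p, and consequently E[βᵀMβ] = ‖β‖² · E[Tr(M)]/p for every β ∈ ℝ^p. -/
open Matrix MeasureTheory ProbabilityTheory BigOperators

lemma aux_unit {p : ℕ} (i j : Fin p) (hij : i ≠ j) (s t : ℝ) :
    (∑ k, (s * (if k = i then (1:ℝ) else 0) + t * (if k = j then 1 else 0)) ^ 2)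
      = s ^ 2 + t ^ 2 := by
  have : ∀ k : Fin p, (s * (if k = i then (1:ℝ) else 0) + t * (if k = j then 1 else 0)) ^ 2
      = s ^ 2 * (if k = i then 1 else 0) + t ^ 2 * (if k = j then 1 else 0) := by
    intro k
    rcases eq_or_ne k i with rfl | h
    · simp [hij, Ne.symm hij, (by simpa using hij : ¬ k = j)]
    · rcases eq_or_ne k j with rfl | h'
      · simp [h]
      · simp [h, h']
  simp_rw [this]
  rw [Finset.sum_add_distrib, ← Finset.mul_sum, ← Finset.mul_sum]
  simp

lemma aux_quad {p : ℕ} (a : Matrix (Fin p) (Fin p) ℝ) (i j : Fin p) (hij : i ≠ j) (s t : ℝ) :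
    (∑ i', ∑ j', (s * (if i' = i then (1:ℝ) else 0) + t * (if i' = j then 1 else 0)) * a i' j'
        * (s * (if j' = i then (1:ℝ) else 0) + t * (if j' = j then 1 else 0)))
      = s * s * a i i + s * t * a i j + t * s * a j i + t * t * a j j := by
  have : ∀ i' j' : Fin p, (s * (if i' = i then (1:ℝ) else 0) + t * (if i' = j then 1 else 0)) * a i' j'
        * (s * (if j' = i then (1:ℝ) else 0) + t * (if j' = j then 1 else 0))
      = (if i' = i then (1:ℝ) else 0) * ((if j' = i then (1:ℝ) else 0) * (s * s * a i' j')
          + (if j' = j then (1:ℝ) else 0) * (s * t * a i' j'))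
        + (if i' = j then (1:ℝ) else 0) * ((if j' = i then (1:ℝ) else 0) * (t * s * a i' j')
          + (if j' = j then (1:ℝ) else 0) * (t * t * a i' j')) := by
    intro i' j'; ring
  simp_rw [this]
  simp [Finset.sum_add_distrib, ite_mul, zero_mul, one_mul, Finset.sum_ite_eq', hij, Ne.symm hij]
  ring

/-- **Rotation-balanced random symmetric matrices have scalar mean.** Let `M` be a random
symmetric `p×p` matrix with integrable entries such that for all unit vectors `u, v ∈ ℝᵖ`
the random variables `uᵀMu` and `vᵀMv` are identically distributed. Then
`E[M] = (E[Tr M]/p) · I`, and consequently `E[βᵀMβ] = ‖β‖² E[Tr M]/p` for all `β`. -/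
theorem mean_of_quadratic_form_invariant_matrix
    (p : ℕ) (hp : 0 < p)
    {Ω : Type*} [MeasurableSpace Ω] (μ : Measure Ω) [IsProbabilityMeasure μ]
    (M : Ω → Matrix (Fin p) (Fin p) ℝ)
    (hsymm : ∀ ω, (M ω).IsSymm)
    (hint : ∀ i j, Integrable (fun ω => M ω i j) μ)
    (hdist : ∀ u v : Fin p → ℝ, (∑ i, (u i) ^ 2) = 1 → (∑ i, (v i) ^ 2) = 1 →
      IdentDistrib (fun ω => u ⬝ᵥ (M ω).mulVec u) (fun ω => v ⬝ᵥ (M ω).mulVec v) μ μ) :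
    (fun i j => ∫ ω, M ω i j ∂μ) =
        ((∫ ω, (M ω).trace ∂μ) / p) • (1 : Matrix (Fin p) (Fin p) ℝ) ∧
      ∀ β : Fin p → ℝ,
        (∫ ω, β ⬝ᵥ (M ω).mulVec β ∂μ) = (∑ i, (β i) ^ 2) * ((∫ ω, (M ω).trace ∂μ) / p) := by
  set a : Matrix (Fin p) (Fin p) ℝ := fun i j => ∫ ω, M ω i j ∂μ with ha
  have hQ : ∀ u : Fin p → ℝ, (fun ω => u ⬝ᵥ (M ω).mulVec u)
      = fun ω => ∑ i, ∑ j, u i * M ω i j * u j := by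
    intro u
    funext ω
    simp [dotProduct, Matrix.mulVec, Finset.mul_sum, mul_assoc, mul_comm, mul_left_comm]
  have hI : ∀ u : Fin p → ℝ, (∫ ω, u ⬝ᵥ (M ω).mulVec u ∂μ) = ∑ i, ∑ j, u i * a i j * u j := by
    intro u
    rw [hQ u]
    rw [integral_finset_sum _ (fun i _ => integrable_finset_sum _
      (fun j _ => ((hint i j).const_mul (u i)).mul_const (u j)))]
    refine Finset.sum_congr rfl fun i _ => ?_
    rw [integral_finset_sum _ (fun j _ => ((hint i j).const_mul (u i)).mul_const (u j))]
    refine Finset.sum_congr rfl fun j _ => ?_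
    rw [integral_mul_const, integral_const_mul]
  have hIe : ∀ i : Fin p, (∫ ω, (fun k => if k = i then (1:ℝ) else 0) ⬝ᵥ
      (M ω).mulVec (fun k => if k = i then (1:ℝ) else 0) ∂μ) = a i i := by
    intro i
    rw [hI]
    simp
  have hunit : ∀ i : Fin p, (∑ k, ((fun k => if k = i then (1:ℝ) else 0) k) ^ 2) = 1 := by
    intro i; simp [ite_pow]
  have z : Fin p := ⟨0, hp⟩
  have hdiag : ∀ i : Fin p, a i i = a z z := by
    intro i
    have := (hdist _ _ (hunit i) (hunit z)).integral_eq
    rw [hIe i, hIe z] at this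
    exact this
  have htr : (∫ ω, (M ω).trace ∂μ) = p * a z z := by
    have h1 : (∫ ω, (M ω).trace ∂μ) = ∑ i, a i i := by
      simp only [Matrix.trace, Matrix.diag]
      rw [integral_finset_sum _ (fun i _ => hint i i)]
    rw [h1, Finset.sum_congr rfl (fun i _ => hdiag i)]
    simp [mul_comm]
  have hazz : a z z = (∫ ω, (M ω).trace ∂μ) / p := by
    rw [htr]; field_simp
  have hasymm : ∀ i j, a j i = a i j := by
    intro i j
    simp only [ha]
    congr 1; funext ω
    exact congrFun (congrFun (hsymm ω) j) i ▸ rfl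
  have hoff : ∀ i j : Fin p, i ≠ j → a i j = 0 := by
    intro i j hij
    set c : ℝ := (Real.sqrt 2)⁻¹ with hc
    have hc2 : c ^ 2 = 2⁻¹ := by
      rw [hc, inv_pow, Real.sq_sqrt (by norm_num)]
    have huu : (∑ k, ((fun k => c * (if k = i then (1:ℝ) else 0) + c * (if k = j then 1 else 0)) k) ^ 2) = 1 := by
      rw [aux_unit i j hij c c, hc2]; norm_num
    have hvv : (∑ k, ((fun k => c * (if k = i then (1:ℝ) else 0) + (-c) * (if k = j then 1 else 0)) k) ^ 2) = 1 := by
      rw [aux_unit i j hij c (-c), neg_sq, hc2]; norm_num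
    have heq := (hdist _ _ huu hvv).integral_eq
    rw [hI _, hI _] at heq
    rw [aux_quad a i j hij c c, aux_quad a i j hij c (-c)] at heq
    have hc0 : c ^ 2 ≠ 0 := by rw [hc2]; norm_num
    have hsum0 : a i j + a j i = 0 := by
      have h2 : c * c = c ^ 2 := by ring
      nlinarith [heq, hc0, sq_nonneg c, hc2]
    have h2 := hasymm i j
    linarith
  have hmain : a = ((∫ ω, (M ω).trace ∂μ) / p) • (1 : Matrix (Fin p) (Fin p) ℝ) := by
    ext i j
    rcases eq_or_ne i j with rfl | hij
    · simp [Matrix.one_apply, hdiag i, hazz]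
    · simp [Matrix.one_apply, hij, hoff i j hij]
  refine ⟨hmain, fun β => ?_⟩
  rw [hI β]
  have hterm : ∀ i j : Fin p, β i * a i j * β j
      = β i * (if i = j then (∫ ω, (M ω).trace ∂μ) / p else 0) * β j := by
    intro i j
    rcases eq_or_ne i j with rfl | hij
    · simp [hdiag i, hazz]
    · simp [hij, hoff i j hij]
  simp_rw [hterm]
  rw [Finset.sum_mul]
  refine Finset.sum_congr rfl fun i _ => ?_
  rw [Finset.sum_eq_single i]
  · simp; ring
  · intro b _ hb; simp [Ne.symm hb]
  · simp
end

section
/- Let Σ_H be a positive semidefinite d×d matrix, let Σ̂_H be a random positive semidefinite matrix with E[Σ̂_H] = Σ_H, and let λ > 0. Then E[Tr(Σ_H (Σ̂_H + λI)⁻¹)] ≥ Tr(Σ_H (Σ_H + λI)⁻¹). -/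
open Matrix MeasureTheory BigOperators

variable {d : ℕ}

lemma trace_nonneg_of_psd {A : Matrix (Fin d) (Fin d) ℝ} (hA : A.PosSemidef) :
    0 ≤ A.trace := by
  apply Finset.sum_nonneg
  intro i _
  have := hA.diag_nonneg (i := i)
  exact this

lemma trace_mul_nonneg_of_psd {A B : Matrix (Fin d) (Fin d) ℝ}
    (hA : A.PosSemidef) (hB : B.PosSemidef) : 0 ≤ (A * B).trace := by
  open scoped MatrixOrder in
  obtain ⟨C, rfl⟩ := CStarAlgebra.nonneg_iff_eq_star_mul_self.mp hB.nonneg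
  rw [← mul_assoc, Matrix.trace_mul_cycle]
  exact trace_nonneg_of_psd (hA.mul_mul_conjTranspose_same C)

lemma smul_one_posDef (lam : ℝ) (hlam : 0 < lam) :
    (lam • (1 : Matrix (Fin d) (Fin d) ℝ)).PosDef := by
  constructor
  · simp [Matrix.IsHermitian]
  · intro x hx
    exact (Matrix.PosDef.one.smul hlam).2 hx

lemma tangent_ineq {S X B : Matrix (Fin d) (Fin d) ℝ}
    (hS : S.PosSemidef) (hX : X.PosDef) (hB : B.PosDef) :
    2 * (S * B⁻¹).trace - (S * (B⁻¹ * X * B⁻¹)).trace ≤ (S * X⁻¹).trace := by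
  have hXu := hX.isUnit
  have hXinv : (X⁻¹).PosSemidef := hX.posSemidef.inv
  have hBinv : (B⁻¹).PosSemidef := hB.posSemidef.inv
  set C : Matrix (Fin d) (Fin d) ℝ := X⁻¹ - B⁻¹ with hC
  have hCh : Cᴴ = C := by
    rw [hC, conjTranspose_sub, hXinv.isHermitian.eq, hBinv.isHermitian.eq]
  have hpsd : (C * X * Cᴴ).PosSemidef := hX.posSemidef.mul_mul_conjTranspose_same C
  rw [hCh] at hpsd
  have hdet : IsUnit X.det := hX.det_pos.ne'.isUnit
  have h1 : X⁻¹ * X = 1 := Matrix.nonsing_inv_mul X hdet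
  have h2 : X * X⁻¹ = 1 := Matrix.mul_nonsing_inv X hdet
  have hId : C * X * C = X⁻¹ - B⁻¹ - B⁻¹ + B⁻¹ * X * B⁻¹ := by
    rw [hC]
    rw [sub_mul, sub_mul, mul_sub, mul_sub]
    rw [h1, mul_assoc B⁻¹ X X⁻¹, h2]
    simp only [one_mul, mul_one]
    abel
  have h0 : 0 ≤ (S * (C * X * C)).trace := trace_mul_nonneg_of_psd hS hpsd
  rw [hId] at h0
  have hexp : (S * (X⁻¹ - B⁻¹ - B⁻¹ + B⁻¹ * X * B⁻¹)).trace
      = (S * X⁻¹).trace - (S * B⁻¹).trace - (S * B⁻¹).trace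
        + (S * (B⁻¹ * X * B⁻¹)).trace := by
    simp [mul_sub, mul_add, Matrix.trace_sub, Matrix.trace_add]
  rw [hexp] at h0
  linarith

/-- **Jensen lower bound for the resolvent trace.** Let `Σ_H ⪰ 0`, let `Σ̂_H` be an
integrable random positive semidefinite matrix with mean `Σ_H`, and let `λ > 0`. Then
`E[Tr(Σ_H (Σ̂_H + λI)⁻¹)] ≥ Tr(Σ_H (Σ_H + λI)⁻¹)`. -/
theorem resolvent_trace_jensen_lower_bound (d : ℕ)
    {Ω : Type*} [MeasurableSpace Ω] (μ : Measure Ω) [IsProbabilityMeasure μ]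
    (SigH : Matrix (Fin d) (Fin d) ℝ) (hSigH : SigH.PosSemidef)
    (SigHat : Ω → Matrix (Fin d) (Fin d) ℝ)
    (hSigHatPSD : ∀ ω, (SigHat ω).PosSemidef)
    (hSigHatInt : ∀ i j, Integrable (fun ω => SigHat ω i j) μ)
    (hmean : (fun i j => ∫ ω, SigHat ω i j ∂μ) = SigH)
    (lam : ℝ) (hlam : 0 < lam)
    (hTrInt : Integrable
      (fun ω => (SigH * (SigHat ω + lam • (1 : Matrix (Fin d) (Fin d) ℝ))⁻¹).trace) μ) :
    (SigH * (SigH + lam • (1 : Matrix (Fin d) (Fin d) ℝ))⁻¹).trace ≤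
      ∫ ω, (SigH * (SigHat ω + lam • (1 : Matrix (Fin d) (Fin d) ℝ))⁻¹).trace ∂μ := by
  set B : Matrix (Fin d) (Fin d) ℝ := SigH + lam • 1 with hBdef
  have hBpd : B.PosDef := Matrix.PosDef.posSemidef_add hSigH (smul_one_posDef lam hlam)
  set R : Matrix (Fin d) (Fin d) ℝ := B⁻¹ with hRdef
  set K : Matrix (Fin d) (Fin d) ℝ := R * SigH * R with hKdef
  set X : Ω → Matrix (Fin d) (Fin d) ℝ := fun ω => SigHat ω + lam • 1 with hXdef
  have hXpd : ∀ ω, (X ω).PosDef := fun ω =>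
    Matrix.PosDef.posSemidef_add (hSigHatPSD ω) (smul_one_posDef lam hlam)
  -- trace representation
  have hrepr : ∀ M : Matrix (Fin d) (Fin d) ℝ,
      (SigH * (R * M * R)).trace = ∑ i, ∑ j, K i j * M j i := by
    intro M
    have h1 : SigH * (R * M * R) = ((SigH * R) * M) * R := by
      simp only [mul_assoc]
    rw [h1, Matrix.trace_mul_cycle, ← mul_assoc, ← hKdef]
    simp [Matrix.trace, Matrix.mul_apply, Matrix.diag]
  -- integrability of each entry of X
  have hXint : ∀ i j, Integrable (fun ω => X ω i j) μ := by
    intro i j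
    exact (hSigHatInt i j).add (integrable_const _)
  -- integral of each entry of X
  have hXmean : ∀ i j, (∫ ω, X ω i j ∂μ) = B i j := by
    intro i j
    rw [show (fun ω => X ω i j) = fun ω => SigHat ω i j + (lam • (1:Matrix (Fin d) (Fin d) ℝ)) i j from rfl]
    rw [integral_add (hSigHatInt i j) (integrable_const _), integral_const]
    have := congrFun (congrFun hmean i) j
    simp [this, hBdef]
  -- the affine lower bound function
  have hhInt : Integrable (fun ω => (SigH * (R * X ω * R)).trace) μ := by
    simp only [hrepr]
    apply integrable_finset_sum
    intro i _
    apply integrable_finset_sum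
    intro j _
    exact (hXint j i).const_mul _
  have hhval : (∫ ω, (SigH * (R * X ω * R)).trace ∂μ) = (SigH * R).trace := by
    simp only [hrepr]
    rw [integral_finset_sum _ (f := fun i ω => ∑ j, K i j * X ω j i) (fun i _ => integrable_finset_sum _
      (fun j _ => (hXint j i).const_mul _))]
    have : ∀ i ∈ Finset.univ, (∫ ω, ∑ j, K i j * X ω j i ∂μ) = ∑ j, K i j * B j i := by
      intro i _
      rw [integral_finset_sum _ (fun j _ => (hXint j i).const_mul _)]
      exact Finset.sum_congr rfl fun j _ => by rw [integral_const_mul, hXmean]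
    rw [Finset.sum_congr rfl this]
    have hKB : (∑ i, ∑ j, K i j * B j i) = (K * B).trace := by
      simp [Matrix.trace, Matrix.mul_apply, Matrix.diag]
    rw [hKB]
    have hRB : R * B = 1 := Matrix.nonsing_inv_mul B hBpd.det_pos.ne'.isUnit
    have : K * B = R * SigH := by
      rw [hKdef, mul_assoc, hRB, mul_one]
    rw [this, Matrix.trace_mul_comm]
  -- pointwise tangent inequality
  have hpt : ∀ ω, 2 * (SigH * R).trace - (SigH * (R * X ω * R)).trace ≤
      (SigH * (X ω)⁻¹).trace := fun ω => tangent_ineq hSigH (hXpd ω) hBpd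
  have hgInt : Integrable
      (fun ω => 2 * (SigH * R).trace - (SigH * (R * X ω * R)).trace) μ :=
    (integrable_const _).sub hhInt
  have hmono := integral_mono hgInt hTrInt hpt
  rw [integral_sub (integrable_const _) hhInt, integral_const, hhval] at hmono
  simp only [probReal_univ, one_smul] at hmono
  linarith
end
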